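/- arXiv:0804.4636 — 6 statements merged into one kernel-verified Lean document; each statement's English description precedes it below -/
import Mathlib

section
/- Let n ≥ 2, κ < 0, λ > 0, r > 0, and let v : [0,r] → ℝ be a positive solution on (0,r) of v''(t) + (n-1)(C_κ(t)/S_κ(t)) v'(t) + λ v(t) = 0 with v(0) = 1, v'(0) = 0, where S_κ(t) = sinh(√(-κ) t)/√(-κ) and C_κ = S_κ'. Then for all t ∈ (0,r), n (C_κ(t)/S_κ(t)) v'(t) + λ v(t) < 0. -/
/-!
Multiplying the equation by `S^(n-1)` puts it in divergence form, `(S^(n-1) v')' = -λ S^(n-1) v < 0`,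
and since `S^(n-1) v'` vanishes at `0` (as `S 0 = 0` and `n ≥ 2`) this forces `v' < 0`. The quantity
`F = S^n (n (C/S) v' + λ v) = n C S^(n-1) v' + λ S^n v` also vanishes at `0`, and using the equation
together with `C' = -κ S` its derivative collapses to `(λ - nκ) S^n v'`, which is negative.
-/

open Set

theorem lt_of_hasDerivAt_neg {f f' : ℝ → ℝ} {a b : ℝ} (hab : a < b)
    (hcont : ContinuousOn f (Icc a b)) (hf : ∀ x ∈ Ioo a b, HasDerivAt f (f' x) x)
    (hneg : ∀ x ∈ Ioo a b, f' x < 0) : f b < f a := by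
  refine strictAntiOn_of_deriv_neg (convex_Icc a b) hcont (fun x hx => ?_)
    (left_mem_Icc.2 hab.le) (right_mem_Icc.2 hab.le) hab
  rw [interior_Icc] at hx
  exact (hf x hx).deriv ▸ hneg x hx

theorem Real.hasDerivAt_sinh_mul_div {a : ℝ} (ha : a ≠ 0) (t : ℝ) :
    HasDerivAt (fun t => Real.sinh (a * t) / a) (Real.cosh (a * t)) t := by
  refine ((((hasDerivAt_id' t).const_mul a).sinh).div_const a).congr_deriv ?_
  field_simp

theorem Real.hasDerivAt_cosh_mul {a : ℝ} (ha : a ≠ 0) (t : ℝ) :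
    HasDerivAt (fun t => Real.cosh (a * t)) (a ^ 2 * (Real.sinh (a * t) / a)) t := by
  refine (((hasDerivAt_id' t).const_mul a).cosh).congr_deriv ?_
  field_simp

section RadialEigenfunction

variable {S C v v' v'' : ℝ → ℝ} {n : ℕ} {κ lam r : ℝ}

theorem hasDerivAt_pow_mul_radialDeriv (hn : 2 ≤ n) (hS' : ∀ t, HasDerivAt S (C t) t)
    (hv' : ∀ t ∈ Ico 0 r, HasDerivAt v' (v'' t) t)
    (hode : ∀ t ∈ Ioo 0 r, v'' t + (n - 1 : ℝ) * (C t / S t) * v' t + lam * v t = 0)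
    {t : ℝ} (ht : t ∈ Ioo 0 r) (hSt : S t ≠ 0) :
    HasDerivAt (fun t => S t ^ (n - 1) * v' t) (-(lam * S t ^ (n - 1) * v t)) t := by
  obtain ⟨k, rfl⟩ := Nat.exists_eq_add_of_le' hn
  have hv'' : v'' t = -((k + 1 : ℝ) * (C t / S t) * v' t) - lam * v t := by
    have := hode t ht
    push_cast at this
    linarith
  refine (((hS' t).pow (k + 1)).mul (hv' t (Ioo_subset_Ico_self ht))).congr_deriv ?_
  rw [hv'', Pi.pow_apply]
  push_cast
  field_simp
  ring

theorem radialDeriv_neg (hn : 2 ≤ n) (hlam : 0 < lam)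
    (hS' : ∀ t, HasDerivAt S (C t) t) (hS0 : S 0 = 0) (hSpos : ∀ t ∈ Ioo 0 r, 0 < S t)
    (hv' : ∀ t ∈ Ico 0 r, HasDerivAt v' (v'' t) t) (hpos : ∀ t ∈ Ioo 0 r, 0 < v t)
    (hode : ∀ t ∈ Ioo 0 r, v'' t + (n - 1 : ℝ) * (C t / S t) * v' t + lam * v t = 0) :
    ∀ t ∈ Ioo 0 r, v' t < 0 := by
  intro t ht
  have hIcc : Icc 0 t ⊆ Ico 0 r := Icc_subset_Ico_right ht.2
  have hIoo : Ioo 0 t ⊆ Ioo 0 r := Ioo_subset_Ioo_right ht.2.le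
  have hflux := lt_of_hasDerivAt_neg (f := fun x => S x ^ (n - 1) * v' x) ht.1
    (fun x hx => (((hS' x).pow (n - 1)).mul (hv' x (hIcc hx))).continuousAt.continuousWithinAt)
    (fun x hx => hasDerivAt_pow_mul_radialDeriv hn hS' hv' hode (hIoo hx) (hSpos x (hIoo hx)).ne')
    (fun x hx => neg_neg_of_pos <|
      mul_pos (mul_pos hlam (pow_pos (hSpos x (hIoo hx)) _)) (hpos x (hIoo hx)))
  rw [hS0, zero_pow (by omega), zero_mul] at hflux
  exact neg_of_mul_neg_right hflux (pow_pos (hSpos t ht) _).le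

theorem hasDerivAt_radialEnergy (hn : 2 ≤ n) (hS' : ∀ t, HasDerivAt S (C t) t)
    (hC' : ∀ t, HasDerivAt C (-κ * S t) t)
    (hv : ∀ t ∈ Ico 0 r, HasDerivAt v (v' t) t) (hv' : ∀ t ∈ Ico 0 r, HasDerivAt v' (v'' t) t)
    (hode : ∀ t ∈ Ioo 0 r, v'' t + (n - 1 : ℝ) * (C t / S t) * v' t + lam * v t = 0)
    {t : ℝ} (ht : t ∈ Ioo 0 r) (hSt : S t ≠ 0) :
    HasDerivAt (fun t => n * C t * S t ^ (n - 1) * v' t + lam * S t ^ n * v t)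
      ((lam - n * κ) * S t ^ n * v' t) t := by
  obtain ⟨k, rfl⟩ := Nat.exists_eq_add_of_le' hn
  have hv'' : v'' t = -((k + 1 : ℝ) * (C t / S t) * v' t) - lam * v t := by
    have := hode t ht
    push_cast at this
    linarith
  have ht' : t ∈ Ico 0 r := Ioo_subset_Ico_self ht
  refine (((((hC' t).const_mul ((k + 2 : ℕ) : ℝ)).mul ((hS' t).pow (k + 1))).mul (hv' t ht')).add
    ((((hS' t).pow (k + 2)).const_mul lam).mul (hv t ht'))).congr_deriv ?_
  simp only [hv'', Pi.mul_apply, Pi.pow_apply]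
  push_cast
  field_simp
  ring

theorem radialEigenfunction_bound (hn : 2 ≤ n) (hlam : 0 < lam) (hnκ : n * κ < lam)
    (hS' : ∀ t, HasDerivAt S (C t) t) (hC' : ∀ t, HasDerivAt C (-κ * S t) t) (hS0 : S 0 = 0)
    (hSpos : ∀ t ∈ Ioo 0 r, 0 < S t)
    (hv : ∀ t ∈ Ico 0 r, HasDerivAt v (v' t) t) (hv' : ∀ t ∈ Ico 0 r, HasDerivAt v' (v'' t) t)
    (hpos : ∀ t ∈ Ioo 0 r, 0 < v t)
    (hode : ∀ t ∈ Ioo 0 r, v'' t + (n - 1 : ℝ) * (C t / S t) * v' t + lam * v t = 0) :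
    ∀ t ∈ Ioo 0 r, n * (C t / S t) * v' t + lam * v t < 0 := by
  intro t ht
  have hIcc : Icc 0 t ⊆ Ico 0 r := Icc_subset_Ico_right ht.2
  have hIoo : Ioo 0 t ⊆ Ioo 0 r := Ioo_subset_Ioo_right ht.2.le
  have henergy := lt_of_hasDerivAt_neg
    (f := fun t => n * C t * S t ^ (n - 1) * v' t + lam * S t ^ n * v t) ht.1
    (fun x hx => by
      have := (hv x (hIcc hx)).continuousAt
      have := (hv' x (hIcc hx)).continuousAt
      have := (hS' x).continuousAt
      have := (hC' x).continuousAt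
      exact ContinuousAt.continuousWithinAt (by fun_prop))
    (fun x hx => hasDerivAt_radialEnergy hn hS' hC' hv hv' hode (hIoo hx) (hSpos x (hIoo hx)).ne')
    (fun x hx => mul_neg_of_pos_of_neg (mul_pos (sub_pos.2 hnκ) (pow_pos (hSpos x (hIoo hx)) n))
      (radialDeriv_neg hn hlam hS' hS0 hSpos hv' hpos hode x (hIoo hx)))
  have hfactor : n * C t * S t ^ (n - 1) * v' t + lam * S t ^ n * v t
      = S t ^ n * (n * (C t / S t) * v' t + lam * v t) := by
    have hSt := (hSpos t ht).ne'
    rw [← pow_sub_one_mul (by omega : n ≠ 0)]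
    field_simp
  simp only [hS0, zero_pow (by omega : n - 1 ≠ 0), zero_pow (by omega : n ≠ 0), mul_zero,
    zero_mul, add_zero, hfactor] at henergy
  exact neg_of_mul_neg_right henergy (pow_pos (hSpos t ht) n).le

end RadialEigenfunction

theorem stmt0_general (n : ℕ) (hn : 2 ≤ n) (κ lam r : ℝ) (hκ : κ < 0) (hlam : 0 < lam)
    (v v' v'' : ℝ → ℝ)
    (Sκ : ℝ → ℝ) (Cκ : ℝ → ℝ)
    (hS : Sκ = fun t => Real.sinh (Real.sqrt (-κ) * t) / Real.sqrt (-κ))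
    (hC : Cκ = fun t => Real.cosh (Real.sqrt (-κ) * t))
    (hv : ∀ t ∈ Set.Ico (0:ℝ) r, HasDerivAt v (v' t) t)
    (hv' : ∀ t ∈ Set.Ico (0:ℝ) r, HasDerivAt v' (v'' t) t)
    (hpos : ∀ t ∈ Set.Ioo (0:ℝ) r, 0 < v t)
    (hode : ∀ t ∈ Set.Ioo (0:ℝ) r,
      v'' t + (n - 1 : ℝ) * (Cκ t / Sκ t) * v' t + lam * v t = 0) :
    ∀ t ∈ Set.Ioo (0:ℝ) r, (n : ℝ) * (Cκ t / Sκ t) * v' t + lam * v t < 0 := by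
  subst hS hC
  have ha : 0 < √(-κ) := Real.sqrt_pos.2 (neg_pos.2 hκ)
  have hcosh' (t : ℝ) : HasDerivAt (fun t => Real.cosh (√(-κ) * t))
      (-κ * (Real.sinh (√(-κ) * t) / √(-κ))) t := by
    simpa only [Real.sq_sqrt (neg_nonneg.2 hκ.le)] using Real.hasDerivAt_cosh_mul ha.ne' t
  refine radialEigenfunction_bound hn hlam ?_ (Real.hasDerivAt_sinh_mul_div ha.ne') hcosh'
    (by simp) (fun t ht => div_pos (Real.sinh_pos_iff.2 (mul_pos ha ht.1)) ha) hv hv' hpos hode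
  nlinarith [(Nat.cast_nonneg n : (0 : ℝ) ≤ n)]

/-- hyperbolic case (κ < 0) of the key lemma:
if v is a positive solution of v'' + (n-1)(C_κ/S_κ) v' + λ v = 0 on (0,r)
with v(0)=1, v'(0)=0, then n (C_κ/S_κ) v' + λ v < 0 on (0,r). -/
theorem stmt0 (n : ℕ) (hn : 2 ≤ n) (κ lam r : ℝ) (hκ : κ < 0) (hlam : 0 < lam)
    (hr : 0 < r) (v v' v'' : ℝ → ℝ)
    (Sκ : ℝ → ℝ) (Cκ : ℝ → ℝ)
    (hS : Sκ = fun t => Real.sinh (Real.sqrt (-κ) * t) / Real.sqrt (-κ))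
    (hC : Cκ = fun t => Real.cosh (Real.sqrt (-κ) * t))
    (hv : ∀ t ∈ Set.Ico (0:ℝ) r, HasDerivAt v (v' t) t)
    (hv' : ∀ t ∈ Set.Ico (0:ℝ) r, HasDerivAt v' (v'' t) t)
    (hpos : ∀ t ∈ Set.Ioo (0:ℝ) r, 0 < v t)
    (hode : ∀ t ∈ Set.Ioo (0:ℝ) r,
      v'' t + (n - 1 : ℝ) * (Cκ t / Sκ t) * v' t + lam * v t = 0)
    (hv0 : v 0 = 1) (hv'0 : v' 0 = 0) :
    ∀ t ∈ Set.Ioo (0:ℝ) r, (n : ℝ) * (Cκ t / Sκ t) * v' t + lam * v t < 0 :=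
  stmt0_general n hn κ lam r hκ hlam v v' v'' Sκ Cκ hS hC hv hv' hpos hode
end

section
/- Let n ≥ 2, λ > 0, r > 0, and let v : [0,r] → ℝ be a positive solution on (0,r) of v''(t) + ((n-1)/t) v'(t) + λ v(t) = 0 with v(0) = 1, v'(0) = 0. Then for all t ∈ (0,r), n v'(t)/t + λ v(t) < 0. -/
/-!
Write `n = m + 1`. The ODE in divergence form reads `(t^m v')' = -λ t^m v`; since the flux
`t^m v'` vanishes at `0` and decreases while `v > 0`, we get `v' < 0`. Then
`g(t) = n t^m v' + λ t^n v = t^n (n v'/t + λ v)` satisfies `g' = λ t^n v' < 0` and `g(0) = 0`,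
so `g < 0`.
-/

open Set

theorem lt_zero_of_hasDerivAt_neg {f f' : ℝ → ℝ} {a b : ℝ} (hf : ContinuousOn f (Ico a b))
    (hf' : ∀ x ∈ Ioo a b, HasDerivAt f (f' x) x) (hneg : ∀ x ∈ Ioo a b, f' x < 0)
    (ha : f a = 0) :
    ∀ x ∈ Ioo a b, f x < 0 := by
  intro x hx
  rw [← ha]
  refine strictAntiOn_of_deriv_neg (convex_Ico a b) hf (fun y hy => ?_)
    (left_mem_Ico.2 (hx.1.trans hx.2)) (Ioo_subset_Ico_self hx) hx.1
  rw [interior_Ico] at hy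
  exact (hf' y hy).deriv ▸ hneg y hy

section RadialODE

variable {v v' v'' : ℝ → ℝ} {lam x : ℝ}

theorem hasDerivAt_pow_mul_of_ode (m : ℕ) (hx : x ≠ 0) (hv' : HasDerivAt v' (v'' x) x)
    (hode : v'' x + (m / x) * v' x + lam * v x = 0) :
    HasDerivAt (fun s => s ^ m * v' s) (-(lam * x ^ m * v x)) x := by
  refine ((hasDerivAt_pow m x).mul hv').congr_deriv ?_
  have hpow : (m : ℝ) * x ^ (m - 1) = x ^ m * (m / x) := by
    rcases m with _ | m
    · simp
    · field_simp
      simp [pow_succ]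
  rw [hpow, show v'' x = -(m / x * v' x) - lam * v x by linarith]
  ring

theorem hasDerivAt_flux_add_pow_mul (m : ℕ)
    (hflux : HasDerivAt (fun s => s ^ m * v' s) (-(lam * x ^ m * v x)) x)
    (hv : HasDerivAt v (v' x) x) :
    HasDerivAt (fun s => (m + 1) * (s ^ m * v' s) + lam * (s ^ (m + 1) * v s))
      (lam * x ^ (m + 1) * v' x) x := by
  refine ((hflux.const_mul _).add
    (((hasDerivAt_pow (m + 1) x).mul hv).const_mul lam)).congr_deriv ?_
  push_cast
  ring

end RadialODE

theorem stmt1_general (n : ℕ) (hn : 2 ≤ n) (lam r : ℝ) (hlam : 0 < lam)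
    (v v' v'' : ℝ → ℝ)
    (hv : ∀ t ∈ Set.Ico (0:ℝ) r, HasDerivAt v (v' t) t)
    (hv' : ∀ t ∈ Set.Ico (0:ℝ) r, HasDerivAt v' (v'' t) t)
    (hpos : ∀ t ∈ Set.Ioo (0:ℝ) r, 0 < v t)
    (hode : ∀ t ∈ Set.Ioo (0:ℝ) r,
      v'' t + ((n - 1 : ℝ) / t) * v' t + lam * v t = 0)
    (hv'0 : v' 0 = 0) :
    ∀ t ∈ Set.Ioo (0:ℝ) r, (n : ℝ) * v' t / t + lam * v t < 0 := by
  obtain ⟨m, rfl⟩ : ∃ m, n = m + 1 := ⟨n - 1, by omega⟩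
  have hvc : ContinuousOn v (Ico 0 r) := fun x hx => (hv x hx).continuousAt.continuousWithinAt
  have hv'c : ContinuousOn v' (Ico 0 r) := fun x hx => (hv' x hx).continuousAt.continuousWithinAt
  have hflux : ∀ x ∈ Ioo 0 r, HasDerivAt (fun s => s ^ m * v' s) (-(lam * x ^ m * v x)) x :=
    fun x hx => hasDerivAt_pow_mul_of_ode m hx.1.ne' (hv' x (Ioo_subset_Ico_self hx))
      (by simpa using hode x hx)
  have hv'neg : ∀ x ∈ Ioo 0 r, v' x < 0 := fun x hx =>
    neg_of_mul_neg_right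
      (lt_zero_of_hasDerivAt_neg (by fun_prop) hflux
        (fun y hy => neg_neg_of_pos (by have := hpos y hy; have := hy.1; positivity))
        (by simp [hv'0]) x hx)
      (pow_pos hx.1 m).le
  have hg := lt_zero_of_hasDerivAt_neg (by fun_prop)
    (fun x hx => hasDerivAt_flux_add_pow_mul m (hflux x hx) (hv x (Ioo_subset_Ico_self hx)))
    (fun x hx => mul_neg_of_pos_of_neg (by have := hx.1; positivity) (hv'neg x hx))
    (by simp [hv'0])
  intro t ht
  have hfactor : (m + 1 : ℝ) * (t ^ m * v' t) + lam * (t ^ (m + 1) * v t)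
      = t ^ (m + 1) * ((m + 1 : ℝ) * v' t / t + lam * v t) := by
    field_simp [ht.1.ne']
    ring
  push_cast
  exact neg_of_mul_neg_right (hfactor ▸ hg t ht) (pow_pos ht.1 _).le

/-- Euclidean case (κ = 0) of the key lemma:
if v is a positive solution of v'' + ((n-1)/t) v' + λ v = 0 on (0,r)
with v(0)=1, v'(0)=0, then n v'/t + λ v < 0 on (0,r). -/
theorem stmt1 (n : ℕ) (hn : 2 ≤ n) (lam r : ℝ) (hlam : 0 < lam) (hr : 0 < r)
    (v v' v'' : ℝ → ℝ)
    (hv : ∀ t ∈ Set.Ico (0:ℝ) r, HasDerivAt v (v' t) t)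
    (hv' : ∀ t ∈ Set.Ico (0:ℝ) r, HasDerivAt v' (v'' t) t)
    (hpos : ∀ t ∈ Set.Ioo (0:ℝ) r, 0 < v t)
    (hode : ∀ t ∈ Set.Ioo (0:ℝ) r,
      v'' t + ((n - 1 : ℝ) / t) * v' t + lam * v t = 0)
    (hv0 : v 0 = 1) (hv'0 : v' 0 = 0) :
    ∀ t ∈ Set.Ioo (0:ℝ) r, (n : ℝ) * v' t / t + lam * v t < 0 :=
  stmt1_general n hn lam r hlam v v' v'' hv hv' hpos hode hv'0
end

section
/- Let n ≥ 2, λ > 0, and v : [0,r] → ℝ be a positive C² solution on (0,r) of (t^{n-1} v'(t))' + λ t^{n-1} v(t) = 0 with v(0)=1, v'(0)=0. Define μ(t) = exp(-λ t²/(2n)). Then the Wronskian satisfies t^{n-1}(v'(t)μ(t) − v(t)μ'(t)) = −(λ²/n²) ∫₀ᵗ s^{n+1} μ(s) v(s) ds < 0 for all t ∈ (0,r). -/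
/-!
Write `W(t) = t^(n-1) (v' μ - v μ')`. Since `μ' = -(λ t / n) μ`, one can rewrite
`W = (t^(n-1) v') μ + (λ / n) v t^n μ`; differentiating with the product rule and using the
eigenvalue equation for `t^(n-1) v'`, everything cancels except `-(λ² / n²) t^(n+1) μ v`.
As `W(0) = 0` for `n ≥ 2`, the fundamental theorem of calculus gives the integral formula, and the
integrand is positive on `(0, t)`.
-/

open Set

theorem ContDiffOn.continuousOn_of_hasDerivAt {f f' : ℝ → ℝ} {s : Set ℝ}
    (hf : ContDiffOn ℝ 1 f s) (hs : UniqueDiffOn ℝ s) (hderiv : ∀ x ∈ s, HasDerivAt f (f' x) x) :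
    ContinuousOn f' s :=
  (hf.continuousOn_derivWithin hs le_rfl).congr fun x hx =>
    ((hderiv x hx).hasDerivWithinAt.derivWithin (hs x hx)).symm

theorem hasDerivAt_exp_neg_mul_sq_div (lam c t : ℝ) :
    HasDerivAt (fun t => Real.exp (-lam * t ^ 2 / (2 * c)))
      (-(lam * t / c) * Real.exp (-lam * t ^ 2 / (2 * c))) t := by
  convert (((hasDerivAt_pow 2 t).const_mul (-lam)).div_const (2 * c)).exp using 1
  push_cast
  ring

def radialWronskian (n : ℕ) (v v' μ μ' : ℝ → ℝ) (t : ℝ) : ℝ :=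
  t ^ (n - 1) * (v' t * μ t - v t * μ' t)

section

variable {n : ℕ} {lam : ℝ} {v v' μ μ' : ℝ → ℝ}

theorem hasDerivAt_radialWronskian (hn : n ≠ 0) {t : ℝ} (hv : HasDerivAt v (v' t) t)
    (hode : HasDerivAt (fun s => s ^ (n - 1) * v' s) (-(lam * t ^ (n - 1) * v t)) t)
    (hμ : HasDerivAt μ (μ' t) t) (hμ' : μ' = fun s => -(lam * s / n) * μ s) :
    HasDerivAt (radialWronskian n v v' μ μ')
      (-(lam ^ 2 / (n : ℝ) ^ 2) * (t ^ (n + 1) * μ t * v t)) t := by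
  obtain ⟨k, rfl⟩ := Nat.exists_eq_add_one_of_ne_zero hn
  have hk : (k + 1 : ℝ) ≠ 0 := by positivity
  have hW : radialWronskian (k + 1) v v' μ μ'
      = fun s => (s ^ k * v' s) * μ s + lam / (k + 1) * (v s * (s ^ (k + 1) * μ s)) := by
    funext s
    simp only [radialWronskian, hμ', Nat.add_sub_cancel, Nat.cast_add_one]
    field_simp
    ring
  rw [hW]
  simp only [Nat.add_sub_cancel] at hode
  refine ((hode.mul hμ).add
    ((hv.mul ((hasDerivAt_pow (k + 1) t).mul hμ)).const_mul (lam / (k + 1)))).congr_deriv ?_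
  subst hμ'
  simp only [Pi.mul_apply]
  push_cast
  field_simp
  ring

theorem intervalIntegrable_pow_mul_mul {t : ℝ} (ht : 0 ≤ t) (hμ : Continuous μ)
    (hv : ContinuousOn v (Icc 0 t)) :
    IntervalIntegrable (fun s => s ^ (n + 1) * μ s * v s) MeasureTheory.volume 0 t :=
  (((continuous_pow _).continuousOn.mul hμ.continuousOn).mul
    (by rwa [uIcc_of_le ht])).intervalIntegrable

theorem radialWronskian_eq_neg_integral (hn : 2 ≤ n) {t : ℝ} (ht : 0 < t)
    (hvC : ContinuousOn v (Icc 0 t)) (hv'C : ContinuousOn v' (Icc 0 t))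
    (hv : ∀ s ∈ Ioo 0 t, HasDerivAt v (v' s) s)
    (hode : ∀ s ∈ Ioo 0 t,
      HasDerivAt (fun s => s ^ (n - 1) * v' s) (-(lam * s ^ (n - 1) * v s)) s)
    (hμ : ∀ s, HasDerivAt μ (μ' s) s) (hμ' : μ' = fun s => -(lam * s / n) * μ s) :
    radialWronskian n v v' μ μ' t
      = -(lam ^ 2 / (n : ℝ) ^ 2) * ∫ s in (0 : ℝ)..t, s ^ (n + 1) * μ s * v s := by
  have hμC : Continuous μ := continuous_iff_continuousAt.2 fun s => (hμ s).continuousAt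
  have hμ'C : Continuous μ' := by rw [hμ']; fun_prop
  have hWC : ContinuousOn (radialWronskian n v v' μ μ') (Icc 0 t) :=
    (continuous_pow _).continuousOn.mul
      ((hv'C.mul hμC.continuousOn).sub (hvC.mul hμ'C.continuousOn))
  have hW0 : radialWronskian n v v' μ μ' 0 = 0 := by
    simp [radialWronskian, zero_pow (by omega : n - 1 ≠ 0)]
  have hFTC := intervalIntegral.integral_eq_sub_of_hasDeriv_right_of_le ht.le hWC
    (fun s hs => (hasDerivAt_radialWronskian (by omega) (hv s hs) (hode s hs) (hμ s)
      hμ').hasDerivWithinAt) ((intervalIntegrable_pow_mul_mul ht.le hμC hvC).const_mul _)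
  rw [intervalIntegral.integral_const_mul, hW0, sub_zero] at hFTC
  exact hFTC.symm

end

theorem stmt3_general (n : ℕ) (hn : 2 ≤ n) (lam r : ℝ) (hlam : 0 < lam)
    (v v' : ℝ → ℝ)
    (hv : ∀ t ∈ Set.Ico (0:ℝ) r, HasDerivAt v (v' t) t)
    (hvC2 : ContDiffOn ℝ 2 v (Set.Ico 0 r))
    (hode : ∀ t ∈ Set.Ioo (0:ℝ) r,
      HasDerivAt (fun s => s ^ (n - 1) * v' s) (-(lam * t ^ (n - 1) * v t)) t)
    (hpos : ∀ t ∈ Set.Ioo (0:ℝ) r, 0 < v t)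
    (μ μ' : ℝ → ℝ)
    (hμ : μ = fun t => Real.exp (-lam * t ^ 2 / (2 * n)))
    (hμ' : ∀ t, HasDerivAt μ (μ' t) t) :
    ∀ t ∈ Set.Ioo (0:ℝ) r,
      t ^ (n - 1) * (v' t * μ t - v t * μ' t)
        = -(lam ^ 2 / (n : ℝ) ^ 2) * ∫ s in (0:ℝ)..t, s ^ (n + 1) * μ s * v s ∧
      t ^ (n - 1) * (v' t * μ t - v t * μ' t) < 0 := by
  rintro t ⟨ht, htr⟩
  have hIcc : Icc 0 t ⊆ Ico 0 r := Icc_subset_Ico_right htr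
  have hIoo : Ioo 0 t ⊆ Ioo 0 r := Ioo_subset_Ioo_right htr.le
  have hμ'_eq : μ' = fun s => -(lam * s / n) * μ s := by
    subst hμ
    exact funext fun s => (hμ' s).unique (hasDerivAt_exp_neg_mul_sq_div lam n s)
  have hv'C := (hvC2.of_le one_le_two).continuousOn_of_hasDerivAt (uniqueDiffOn_Ico 0 r) hv
  have hvC := hvC2.continuousOn.mono hIcc
  have hW := radialWronskian_eq_neg_integral hn ht hvC (hv'C.mono hIcc)
    (fun s hs => hv s (Ioo_subset_Ico_self (hIoo hs))) (fun s hs => hode s (hIoo hs)) hμ' hμ'_eq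
  have hI : 0 < ∫ s in (0 : ℝ)..t, s ^ (n + 1) * μ s * v s := by
    have hμC : Continuous μ := by rw [hμ]; fun_prop
    refine intervalIntegral.intervalIntegral_pos_of_pos_on
      (intervalIntegrable_pow_mul_mul ht.le hμC hvC) (fun s hs => ?_) ht
    have hμs : 0 < μ s := by rw [hμ]; exact Real.exp_pos _
    exact mul_pos (mul_pos (pow_pos hs.1 _) hμs) (hpos s (hIoo hs))
  refine ⟨hW, ?_⟩
  change radialWronskian n v v' μ μ' t < 0
  rw [hW]
  exact mul_neg_of_neg_of_pos (neg_neg_of_pos (by positivity)) hI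

/-- Euclidean Wronskian identity. With μ(t) = exp(-λ t²/(2n)),
t^{n-1}(v'μ − vμ') = −(λ²/n²) ∫₀ᵗ s^{n+1} μ(s) v(s) ds < 0 on (0,r). -/
theorem stmt3 (n : ℕ) (hn : 2 ≤ n) (lam r : ℝ) (hlam : 0 < lam) (hr : 0 < r)
    (v v' : ℝ → ℝ)
    (hv : ∀ t ∈ Set.Ico (0:ℝ) r, HasDerivAt v (v' t) t)
    (hvC2 : ContDiffOn ℝ 2 v (Set.Ico 0 r))
    (hode : ∀ t ∈ Set.Ioo (0:ℝ) r,
      HasDerivAt (fun s => s ^ (n - 1) * v' s) (-(lam * t ^ (n - 1) * v t)) t)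
    (hpos : ∀ t ∈ Set.Ioo (0:ℝ) r, 0 < v t)
    (hv0 : v 0 = 1) (hv'0 : v' 0 = 0)
    (μ μ' : ℝ → ℝ)
    (hμ : μ = fun t => Real.exp (-lam * t ^ 2 / (2 * n)))
    (hμ' : ∀ t, HasDerivAt μ (μ' t) t) :
    ∀ t ∈ Set.Ioo (0:ℝ) r,
      t ^ (n - 1) * (v' t * μ t - v t * μ' t)
        = -(lam ^ 2 / (n : ℝ) ^ 2) * ∫ s in (0:ℝ)..t, s ^ (n + 1) * μ s * v s ∧
      t ^ (n - 1) * (v' t * μ t - v t * μ' t) < 0 :=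
  stmt3_general n hn lam r hlam v v' hv hvC2 hode hpos μ μ' hμ hμ'
end

section
/- Let λ > 0, n ≥ 2, κ < 0. With S_κ(t) = sinh(√(-κ)t)/√(-κ) and C_κ(t) = cosh(√(-κ)t), the function μ(t) = C_κ(t)^{λ/(nκ)} satisfies (S_κ^{n-1} μ')'(t) + λ S_κ(t)^{n-1} ( (n-1)/n + 1/(n C_κ(t)²) − (λ/n²) S_κ(t)²/C_κ(t)² ) μ(t) = 0 for t > 0. -/
/-!
Write `a = √(-κ)`, `p = λ/(nκ)`, so that `S_κ(t) = sinh(at)/a`, `S_κ' = C_κ` and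
`μ' = p a sinh(at) cosh(at)^(p-1)`. Since `sinh(at) = a S_κ(t)`, the product rule gives
`(S_κ^k μ')' = p a² S_κ^k μ (k + 1 + (p - 1) tanh²(at))` for every `k`. With `k = n - 1` and
`p a² = -λ/n`, the claim reduces to `cosh² - sinh² = 1`.
-/

open Real

lemma hasDerivAt_cosh_mul_rpow (a p t : ℝ) :
    HasDerivAt (fun s => cosh (a * s) ^ p) (p * a * sinh (a * t) * cosh (a * t) ^ (p - 1)) t :=
  (((hasDerivAt_id' t).const_mul a).cosh.rpow_const (Or.inl (cosh_pos _).ne')).congr_deriv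
    (by ring)

lemma hasDerivAt_sinh_div_pow_mul_deriv_cosh_rpow {a : ℝ} (ha : a ≠ 0) (p : ℝ) (k : ℕ) (t : ℝ) :
    HasDerivAt (fun s => (sinh (a * s) / a) ^ k * (p * a * sinh (a * s) * cosh (a * s) ^ (p - 1)))
      (p * a ^ 2 * (sinh (a * t) / a) ^ k * cosh (a * t) ^ p *
        (k + 1 + (p - 1) * tanh (a * t) ^ 2)) t := by
  have hsinh := ((hasDerivAt_id' t).const_mul a).sinh
  have hS : HasDerivAt (fun s => sinh (a * s) / a) (cosh (a * t)) t :=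
    (hsinh.div_const a).congr_deriv (by field_simp)
  have hflux := ((hS.pow k).mul ((hsinh.const_mul (p * a)).mul
    (hasDerivAt_cosh_mul_rpow a (p - 1) t)))
  refine hflux.congr_deriv ?_
  have hc : cosh (a * t) ≠ 0 := (cosh_pos _).ne'
  simp only [Pi.mul_apply, Pi.pow_apply, tanh_eq_sinh_div_cosh, rpow_sub_one hc]
  rcases k with _ | k
  · field_simp; ring
  · simp only [Nat.add_sub_cancel, pow_succ]; push_cast; field_simp; ring

theorem stmt5_general (n : ℕ) (hn : 2 ≤ n) (κ lam : ℝ) (hκ : κ < 0)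
    (Sκ Cκ μ : ℝ → ℝ)
    (hS : Sκ = fun t => Real.sinh (Real.sqrt (-κ) * t) / Real.sqrt (-κ))
    (hC : Cκ = fun t => Real.cosh (Real.sqrt (-κ) * t))
    (hμ : μ = fun t => Cκ t ^ (lam / (n * κ))) :
    ∀ t > (0:ℝ),
      HasDerivAt (fun s => Sκ s ^ (n - 1) * deriv μ s)
        (-(lam * Sκ t ^ (n - 1) *
            ((n - 1 : ℝ) / n + 1 / (n * Cκ t ^ 2)
              - lam / (n : ℝ) ^ 2 * (Sκ t ^ 2 / Cκ t ^ 2)) * μ t)) t := by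
  intro t _
  subst hS hC hμ
  set a := √(-κ)
  set p := lam / (n * κ)
  have ha : a ≠ 0 := (sqrt_pos.2 (neg_pos.2 hκ)).ne'
  have hκa : κ = -a ^ 2 := by rw [sq_sqrt (neg_nonneg.2 hκ.le), neg_neg]
  have hμ' : deriv (fun s => cosh (a * s) ^ p) =
      fun s => p * a * sinh (a * s) * cosh (a * s) ^ (p - 1) :=
    funext fun s => (hasDerivAt_cosh_mul_rpow a p s).deriv
  rw [hμ']
  refine (hasDerivAt_sinh_div_pow_mul_deriv_cosh_rpow ha p (n - 1) t).congr_deriv ?_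
  have hn' : ((n - 1 : ℕ) : ℝ) + 1 = n := by rw [Nat.cast_sub (by omega)]; ring
  rw [hn', tanh_eq_sinh_div_cosh]
  simp only [p, hκa]
  field_simp
  linear_combination -lam * a ^ 2 * n * cosh_sq (a * t)

/-- Sturm–Liouville form for μ(t) = C_κ(t)^{λ/(nκ)} (κ < 0):
(S_κ^{n-1} μ')' + λ S_κ^{n-1}((n-1)/n + 1/(nC_κ²) − (λ/n²)S_κ²/C_κ²) μ = 0. -/
theorem stmt5 (n : ℕ) (hn : 2 ≤ n) (κ lam : ℝ) (hκ : κ < 0) (hlam : 0 < lam)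
    (Sκ Cκ μ : ℝ → ℝ)
    (hS : Sκ = fun t => Real.sinh (Real.sqrt (-κ) * t) / Real.sqrt (-κ))
    (hC : Cκ = fun t => Real.cosh (Real.sqrt (-κ) * t))
    (hμ : μ = fun t => Cκ t ^ (lam / (n * κ))) :
    ∀ t > (0:ℝ),
      HasDerivAt (fun s => Sκ s ^ (n - 1) * deriv μ s)
        (-(lam * Sκ t ^ (n - 1) *
            ((n - 1 : ℝ) / n + 1 / (n * Cκ t ^ 2)
              - lam / (n : ℝ) ^ 2 * (Sκ t ^ 2 / Cκ t ^ 2)) * μ t)) t :=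
  stmt5_general n hn κ lam hκ Sκ Cκ μ hS hC hμ
end

section
/- Let n ≥ 2, κ < 0, λ > 0, r > 0. Suppose v, μ : (0,r) → ℝ are positive C² functions with (S_κ^{n-1} v')' + λ S_κ^{n-1} v = 0 and (S_κ^{n-1} μ')' + λ S_κ^{n-1} ((n-1)/n + 1/(nC_κ²) − (λ/n²) S_κ²/C_κ²) μ = 0, and the Wronskian W = S_κ^{n-1}(v'μ − μ'v) satisfies W(t) → 0 as t → 0⁺. Then W(t) = −∫₀ᵗ λ S_κ(s)^{n-1} (1/n − 1/(nC_κ(s)²) + (λ/n²) S_κ(s)²/C_κ(s)²) μ(s) v(s) ds < 0 for all t ∈ (0,r). -/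
open Set Filter Topology MeasureTheory

/-!
The two Sturm–Liouville equations share the weight `S_κ^{n-1}`, so the mixed terms cancel in
`W' = (S_κ^{n-1} v')' μ - (S_κ^{n-1} μ')' v`, leaving `W' = -f` with `f` the integrand, which is
positive on `(0, r)` because `C_κ > 1` there. A function with nonnegative derivative and finite
one-sided limits at both ends has an integrable derivative, so the fundamental theorem of calculus
applies on `(0, t)` and gives `W t = lim_{0⁺} W - ∫₀ᵗ f = -∫₀ᵗ f < 0`.
-/

theorem hasDerivAt_wronskian {p u u' w w' : ℝ → ℝ} {a b t : ℝ}
    (hu : HasDerivAt u (u' t) t) (hw : HasDerivAt w (w' t) t)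
    (hpu : HasDerivAt (fun s => p s * u' s) a t)
    (hpw : HasDerivAt (fun s => p s * w' s) b t) :
    HasDerivAt (fun s => p s * (u' s * w s - w' s * u s)) (a * w t - b * u t) t := by
  have hprod := (hpu.fun_mul hw).fun_sub (hpw.fun_mul hu)
  rw [show (fun s => p s * (u' s * w s - w' s * u s)) = fun s => p s * u' s * w s - p s * w' s * u s
    from funext fun s => by ring]
  exact hprod.congr_deriv (by ring)

theorem intervalIntegrable_deriv_of_nonneg_of_tendsto {g g' : ℝ → ℝ} {a b ga gb : ℝ} (hab : a ≤ b)
    (hderiv : ∀ x ∈ Ioo a b, HasDerivAt g (g' x) x) (hpos : ∀ x ∈ Ioo a b, 0 ≤ g' x)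
    (ha : Tendsto g (𝓝[>] a) (𝓝 ga)) (hb : Tendsto g (𝓝[<] b) (𝓝 gb)) :
    IntervalIntegrable g' volume a b := by
  have hcont : ContinuousOn g (Ioo a b) := fun x hx => (hderiv x hx).continuousAt.continuousWithinAt
  refine (intervalIntegrable_iff_integrableOn_Ioc_of_le hab).2 <|
    intervalIntegral.integrableOn_deriv_of_nonneg (continuousOn_Icc_extendFrom_Ioo hcont ha hb)
      (fun x hx => (hderiv x hx).congr_of_eventuallyEq ?_) hpos
  filter_upwards [Ioo_mem_nhds hx.1 hx.2] with y hy using extendFrom_extends hcont y hy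

theorem eq_neg_integral_and_neg_of_hasDerivAt_neg {W f : ℝ → ℝ} {a b : ℝ} (hab : a < b)
    (hderiv : ∀ x ∈ Ioc a b, HasDerivAt W (-f x) x) (hf : ∀ x ∈ Ioo a b, 0 < f x)
    (ha : Tendsto W (𝓝[>] a) (𝓝 0)) :
    W b = -∫ x in a..b, f x ∧ W b < 0 := by
  have hderiv' : ∀ x ∈ Ioo a b, HasDerivAt (fun y => -W y) (f x) x := fun x hx => by
    simpa using (hderiv x (Ioo_subset_Ioc_self hx)).fun_neg
  have hb : Tendsto (fun y => -W y) (𝓝[<] b) (𝓝 (-W b)) :=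
    ((hderiv b (right_mem_Ioc.2 hab)).continuousAt.tendsto.mono_left nhdsWithin_le_nhds).neg
  have hint : IntervalIntegrable f volume a b :=
    intervalIntegrable_deriv_of_nonneg_of_tendsto hab.le hderiv' (fun x hx => (hf x hx).le) ha.neg
      hb
  have hFTC := intervalIntegral.integral_eq_sub_of_hasDerivAt_of_tendsto hab hderiv' hint ha.neg hb
  have hpos := intervalIntegral.intervalIntegral_pos_of_pos_on hint hf hab
  simp only [neg_zero, sub_zero] at hFTC
  constructor <;> linarith

theorem inv_sub_inv_mul_sq_add_pos {n lam S C : ℝ} (hn : 0 < n) (hlam : 0 ≤ lam) (hC : 1 < C) :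
    0 < 1 / n - 1 / (n * C ^ 2) + lam / n ^ 2 * (S ^ 2 / C ^ 2) := by
  have hlt : 1 / (n * C ^ 2) < 1 / n :=
    one_div_lt_one_div_of_lt hn (lt_mul_of_one_lt_right hn (one_lt_pow₀ hC two_ne_zero))
  have : 0 ≤ lam / n ^ 2 * (S ^ 2 / C ^ 2) := by positivity
  linarith

theorem stmt6_general (n : ℕ) (hn : 2 ≤ n) (κ lam r : ℝ) (hκ : κ < 0) (hlam : 0 < lam)
    (Sκ Cκ v v' μ μ' W : ℝ → ℝ)
    (hS : Sκ = fun t => Real.sinh (Real.sqrt (-κ) * t) / Real.sqrt (-κ))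
    (hC : Cκ = fun t => Real.cosh (Real.sqrt (-κ) * t))
    (hvpos : ∀ t ∈ Set.Ioo (0:ℝ) r, 0 < v t)
    (hμpos : ∀ t ∈ Set.Ioo (0:ℝ) r, 0 < μ t)
    (hdv : ∀ t ∈ Set.Ioo (0:ℝ) r, HasDerivAt v (v' t) t)
    (hdμ : ∀ t ∈ Set.Ioo (0:ℝ) r, HasDerivAt μ (μ' t) t)
    (hodev : ∀ t ∈ Set.Ioo (0:ℝ) r,
      HasDerivAt (fun s => Sκ s ^ (n - 1) * v' s) (-(lam * Sκ t ^ (n - 1) * v t)) t)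
    (hodeμ : ∀ t ∈ Set.Ioo (0:ℝ) r,
      HasDerivAt (fun s => Sκ s ^ (n - 1) * μ' s)
        (-(lam * Sκ t ^ (n - 1) *
            ((n - 1 : ℝ) / n + 1 / (n * Cκ t ^ 2)
              - lam / (n : ℝ) ^ 2 * (Sκ t ^ 2 / Cκ t ^ 2)) * μ t)) t)
    (hW : W = fun t => Sκ t ^ (n - 1) * (v' t * μ t - μ' t * v t))
    (hW0 : Filter.Tendsto W (nhdsWithin 0 (Set.Ioi 0)) (nhds 0)) :
    ∀ t ∈ Set.Ioo (0:ℝ) r,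
      W t = -∫ s in (0:ℝ)..t,
          lam * Sκ s ^ (n - 1) *
            (1 / (n : ℝ) - 1 / (n * Cκ s ^ 2)
              + lam / (n : ℝ) ^ 2 * (Sκ s ^ 2 / Cκ s ^ 2)) * μ s * v s ∧
      W t < 0 := by
  intro t ht
  have hn0 : (0 : ℝ) < n := by exact_mod_cast (by omega : 0 < n)
  have hsqrt : 0 < Real.sqrt (-κ) := Real.sqrt_pos.2 (neg_pos.2 hκ)
  have hWderiv : ∀ s ∈ Ioo 0 r, HasDerivAt W (-(lam * Sκ s ^ (n - 1) *
      (1 / (n : ℝ) - 1 / (n * Cκ s ^ 2) + lam / (n : ℝ) ^ 2 * (Sκ s ^ 2 / Cκ s ^ 2)) *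
        μ s * v s)) s := fun s hs => by
    rw [hW]
    convert hasDerivAt_wronskian (hdv s hs) (hdμ s hs) (hodev s hs) (hodeμ s hs) using 1
    field_simp
    ring
  refine eq_neg_integral_and_neg_of_hasDerivAt_neg ht.1
    (fun s hs => hWderiv s ⟨hs.1, hs.2.trans_lt ht.2⟩) (fun s hs => ?_) hW0
  have hs' : s ∈ Ioo 0 r := ⟨hs.1, hs.2.trans ht.2⟩
  have hSpos : 0 < Sκ s := by
    rw [hS]
    exact div_pos (Real.sinh_pos_iff.2 (mul_pos hsqrt hs.1)) hsqrt
  have hC1 : 1 < Cκ s := by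
    rw [hC]
    exact Real.one_lt_cosh.2 (mul_pos hsqrt hs.1).ne'
  have hweight := inv_sub_inv_mul_sq_add_pos hn0 hlam.le hC1 (S := Sκ s)
  have hμs := hμpos s hs'
  have hvs := hvpos s hs'
  positivity

/-- hyperbolic Wronskian comparison. If v, μ > 0 solve their
respective Sturm–Liouville equations and the Wronskian W = S_κ^{n-1}(v'μ − μ'v)
tends to 0 at 0⁺, then W(t) equals minus the stated integral and is negative. -/
theorem stmt6 (n : ℕ) (hn : 2 ≤ n) (κ lam r : ℝ) (hκ : κ < 0) (hlam : 0 < lam)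
    (hr : 0 < r) (Sκ Cκ v v' μ μ' W : ℝ → ℝ)
    (hS : Sκ = fun t => Real.sinh (Real.sqrt (-κ) * t) / Real.sqrt (-κ))
    (hC : Cκ = fun t => Real.cosh (Real.sqrt (-κ) * t))
    (hvC2 : ContDiffOn ℝ 2 v (Set.Ioo 0 r)) (hμC2 : ContDiffOn ℝ 2 μ (Set.Ioo 0 r))
    (hvpos : ∀ t ∈ Set.Ioo (0:ℝ) r, 0 < v t)
    (hμpos : ∀ t ∈ Set.Ioo (0:ℝ) r, 0 < μ t)
    (hdv : ∀ t ∈ Set.Ioo (0:ℝ) r, HasDerivAt v (v' t) t)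
    (hdμ : ∀ t ∈ Set.Ioo (0:ℝ) r, HasDerivAt μ (μ' t) t)
    (hodev : ∀ t ∈ Set.Ioo (0:ℝ) r,
      HasDerivAt (fun s => Sκ s ^ (n - 1) * v' s) (-(lam * Sκ t ^ (n - 1) * v t)) t)
    (hodeμ : ∀ t ∈ Set.Ioo (0:ℝ) r,
      HasDerivAt (fun s => Sκ s ^ (n - 1) * μ' s)
        (-(lam * Sκ t ^ (n - 1) *
            ((n - 1 : ℝ) / n + 1 / (n * Cκ t ^ 2)
              - lam / (n : ℝ) ^ 2 * (Sκ t ^ 2 / Cκ t ^ 2)) * μ t)) t)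
    (hW : W = fun t => Sκ t ^ (n - 1) * (v' t * μ t - μ' t * v t))
    (hW0 : Filter.Tendsto W (nhdsWithin 0 (Set.Ioi 0)) (nhds 0)) :
    ∀ t ∈ Set.Ioo (0:ℝ) r,
      W t = -∫ s in (0:ℝ)..t,
          lam * Sκ s ^ (n - 1) *
            (1 / (n : ℝ) - 1 / (n * Cκ s ^ 2)
              + lam / (n : ℝ) ^ 2 * (Sκ s ^ 2 / Cκ s ^ 2)) * μ s * v s ∧
      W t < 0 :=
  stmt6_general n hn κ lam r hκ hlam Sκ Cκ v v' μ μ' W hS hC hvpos hμpos hdv hdμ hodev hodeμ hW hW0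
end

section
/- Let v : (0,r) → ℝ be positive, satisfying v''(t) + (m-2)(C_κ/S_κ)(t) v'(t) + λ v(t) = 0 with λ > 0 and v'(t) ≤ 0, and suppose (m-1)(C_κ/S_κ)(t) v'(t) + λ v(t) < 0 on (0,r). Let a_1,…,a_m, b_1,…,b_m be reals with Σa_i² ≤ 1 and Σb_i² ≤ 1. Then −v''(t) Σa_i² − v'(t)(C_κ/S_κ)(t)(m − Σa_i² − Σb_i²) ≥ λ v(t) for all t ∈ (0,r). -/
/-- The standard comparison function S_κ of constant curvature κ. -/
noncomputable def Sk (κ t : ℝ) : ℝ :=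
  if 0 < κ then Real.sin (Real.sqrt κ * t) / Real.sqrt κ
  else if κ < 0 then Real.sinh (Real.sqrt (-κ) * t) / Real.sqrt (-κ)
  else t

/-- C_κ = S_κ'. -/
noncomputable def Ck (κ t : ℝ) : ℝ :=
  if 0 < κ then Real.cos (Real.sqrt κ * t)
  else if κ < 0 then Real.cosh (Real.sqrt (-κ) * t)
  else 1

/-!
Eliminating `v''` with the ODE, the defect `-v'' A - v' Q (m - A - B) - λ v` (with `Q = C_κ / S_κ`,
`A = Σ aᵢ²`, `B = Σ bᵢ²`) equals `-((m - 1) Q v' + λ v) (1 - A) - Q v' (1 - B)`. Both terms are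
nonnegative: the first by the hypothesis on `(m - 1) Q v' + λ v`, the second because that same
hypothesis together with `λ v > 0` forces `Q v' < 0`.
-/

theorem lam_mul_le_of_radial_ode {m Q lam v w w'' A B : ℝ} (hm : 1 < m) (hlamv : 0 < lam * v)
    (hode : w'' + (m - 2) * Q * w + lam * v = 0) (hkey : (m - 1) * Q * w + lam * v < 0)
    (hA : A ≤ 1) (hB : B ≤ 1) :
    lam * v ≤ -w'' * A - w * Q * (m - A - B) := by
  have hQw : Q * w < 0 :=
    neg_of_mul_neg_right (by linarith [mul_assoc (m - 1) Q w] : (m - 1) * (Q * w) < 0)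
      (sub_pos.2 hm).le
  have hdefect : -w'' * A - w * Q * (m - A - B) - lam * v
      = -((m - 1) * Q * w + lam * v) * (1 - A) + -(Q * w) * (1 - B) := by
    linear_combination (-A) * hode
  have := add_nonneg (mul_nonneg (neg_nonneg.2 hkey.le) (sub_nonneg.2 hA))
    (mul_nonneg (neg_nonneg.2 hQw.le) (sub_nonneg.2 hB))
  linarith

theorem stmt12_general (m : ℕ) (hm : 2 ≤ m) (κ lam r : ℝ) (hlam : 0 < lam)
    (v v' v'' : ℝ → ℝ)
    (hpos : ∀ t ∈ Set.Ioo (0:ℝ) r, 0 < v t)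
    (hode : ∀ t ∈ Set.Ioo (0:ℝ) r,
      v'' t + (m - 2 : ℝ) * (Ck κ t / Sk κ t) * v' t + lam * v t = 0)
    (hkey : ∀ t ∈ Set.Ioo (0:ℝ) r,
      (m - 1 : ℝ) * (Ck κ t / Sk κ t) * v' t + lam * v t < 0)
    (a b : Fin m → ℝ) (ha : ∑ i, a i ^ 2 ≤ 1) (hb : ∑ i, b i ^ 2 ≤ 1) :
    ∀ t ∈ Set.Ioo (0:ℝ) r,
      lam * v t ≤ -v'' t * ∑ i, a i ^ 2
        - v' t * (Ck κ t / Sk κ t) * ((m : ℝ) - (∑ i, a i ^ 2) - ∑ i, b i ^ 2) := by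
  intro t ht
  exact lam_mul_le_of_radial_ode (by exact_mod_cast hm) (mul_pos hlam (hpos t ht))
    (hode t ht) (hkey t ht) ha hb

/-- the pointwise algebraic inequality in the proof of Theorem 1.1. -/
theorem stmt12 (m : ℕ) (hm : 2 ≤ m) (κ lam r : ℝ) (hlam : 0 < lam) (hr : 0 < r)
    (v v' v'' : ℝ → ℝ)
    (hpos : ∀ t ∈ Set.Ioo (0:ℝ) r, 0 < v t)
    (hode : ∀ t ∈ Set.Ioo (0:ℝ) r,
      v'' t + (m - 2 : ℝ) * (Ck κ t / Sk κ t) * v' t + lam * v t = 0)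
    (hv'le : ∀ t ∈ Set.Ioo (0:ℝ) r, v' t ≤ 0)
    (hkey : ∀ t ∈ Set.Ioo (0:ℝ) r,
      (m - 1 : ℝ) * (Ck κ t / Sk κ t) * v' t + lam * v t < 0)
    (a b : Fin m → ℝ) (ha : ∑ i, a i ^ 2 ≤ 1) (hb : ∑ i, b i ^ 2 ≤ 1) :
    ∀ t ∈ Set.Ioo (0:ℝ) r,
      lam * v t ≤ -v'' t * ∑ i, a i ^ 2
        - v' t * (Ck κ t / Sk κ t) * ((m : ℝ) - (∑ i, a i ^ 2) - ∑ i, b i ^ 2) :=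
  stmt12_general m hm κ lam r hlam v v' v'' hpos hode hkey a b ha hb
end
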